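/- With R(c_1,…,c_K) as in the HBCT end-to-end bit delivery formula, ∂R/∂c_1 has the same sign as p_1 B_1 − ζ P_t h_1 (Ω_1 − B_1); in particular R is increasing in c_1 if Ω_1 < B_1·(1 + p_1/(ζ P_t h_1)) and decreasing in c_1 if Ω_1 > B_1·(1 + p_1/(ζ P_t h_1)). -/

import Mathlib

/-!
Write `a = ζ P_t h_1`, `u = 1 - c_1` and `X_1 = B_1 + u (Ω_1 - B_1)`. Only the source-hop part
`(u p_1 + a) / (a X_1)` of the denominator of `R` depends on `c_1`, and since
`X_1 - u (Ω_1 - B_1) = B_1` its derivative in `c_1` collapses to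
`-(p_1 B_1 - a (Ω_1 - B_1)) / (a X_1²)`. Hence
`∂R/∂c_1 = T (p_1 B_1 - a (Ω_1 - B_1)) / (a X_1² D²)`, with `D > 0` the denominator.
-/

open Finset

/-- The paper's `X_i`, as a function of `c_i`. -/
def hopRate (b w t : ℝ) : ℝ := b + (1 - t) * (w - b)

lemma hopRate_pos {b w t : ℝ} (hb : 0 < b) (hw : 0 < w) (ht : t ∈ Set.Icc (0 : ℝ) 1) :
    0 < hopRate b w t := by
  obtain ⟨ht₀, ht₁⟩ := ht
  unfold hopRate
  nlinarith [mul_nonneg ht₀ hb.le, mul_nonneg (sub_nonneg.2 ht₁) hw.le, mul_pos hb hw]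

lemma hasDerivAt_hopRate (b w t : ℝ) : HasDerivAt (hopRate b w) (b - w) t := by
  have h := (((hasDerivAt_id t).const_sub 1).mul_const (w - b)).const_add b
  exact h.congr_deriv (by ring)

lemma hasDerivAt_one_div_hopRate {b w t : ℝ} (hx : hopRate b w t ≠ 0) :
    HasDerivAt (fun s => 1 / hopRate b w s) ((w - b) / hopRate b w t ^ 2) t := by
  have h := (hasDerivAt_const t (1 : ℝ)).div (hasDerivAt_hopRate b w t) hx
  exact h.congr_deriv (by ring)

lemma hasDerivAt_one_sub_mul_div_hopRate {a p b w t : ℝ} (ha : a ≠ 0)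
    (hx : hopRate b w t ≠ 0) :
    HasDerivAt (fun s => (1 - s) * p / (a * hopRate b w s))
      (-(p * b) / (a * hopRate b w t ^ 2)) t := by
  have hnum : HasDerivAt (fun s => (1 - s) * p) (-p) t := by
    simpa using ((hasDerivAt_id t).const_sub 1).mul_const p
  have h := hnum.div ((hasDerivAt_hopRate b w t).const_mul a) (mul_ne_zero ha hx)
  refine h.congr_deriv ?_
  unfold hopRate at hx ⊢
  field_simp
  ring

lemma HasDerivAt.sum_apply_update {ι : Type*} [Fintype ι] [DecidableEq ι]
    {F : ι → ℝ → ℝ} {c : ι → ℝ} {i : ι} {d t : ℝ} (hF : HasDerivAt (F i) d t) :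
    HasDerivAt (fun s => ∑ k, F k (Function.update c i s k)) d t := by
  have hsplit : (fun s => ∑ k, F k (Function.update c i s k))
      = fun s => F i s + ∑ k ∈ univ \ {i}, F k (c k) := by
    funext s
    simp only [Function.apply_update F, sum_update_of_mem (mem_univ i)]
  rw [hsplit]
  exact hF.add_const _

section Denominator

variable {ι : Type*} [Fintype ι]

/-- The denominator of `R`, with `a = ζ P_t h_1` and the source hop `i`. -/
noncomputable def deliveryDenominator (a p : ℝ) (B Ω : ι → ℝ) (i : ι)
    (c : ι → ℝ) : ℝ :=
  (1 - c i) * p / (a * hopRate (B i) (Ω i) (c i)) + ∑ k, 1 / hopRate (B k) (Ω k) (c k)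

lemma deliveryDenominator_pos {a p : ℝ} {B Ω c : ι → ℝ} (i : ι) (ha : 0 < a) (hp : 0 ≤ p)
    (hB : ∀ k, 0 < B k) (hΩ : ∀ k, 0 < Ω k) (hc : ∀ k, c k ∈ Set.Icc (0 : ℝ) 1) :
    0 < deliveryDenominator a p B Ω i c := by
  have hX : ∀ k, 0 < hopRate (B k) (Ω k) (c k) := fun k => hopRate_pos (hB k) (hΩ k) (hc k)
  have hharvest : 0 ≤ (1 - c i) * p / (a * hopRate (B i) (Ω i) (c i)) :=
    div_nonneg (mul_nonneg (sub_nonneg.2 (hc i).2) hp) (mul_pos ha (hX i)).le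
  have hsum : 0 < ∑ k, 1 / hopRate (B k) (Ω k) (c k) :=
    sum_pos (fun k _ => one_div_pos.2 (hX k)) ⟨i, mem_univ i⟩
  exact add_pos_of_nonneg_of_pos hharvest hsum

lemma hasDerivAt_deliveryDenominator_update [DecidableEq ι] {a p : ℝ} {B Ω c : ι → ℝ}
    {i : ι} (ha : a ≠ 0) (hx : hopRate (B i) (Ω i) (c i) ≠ 0) :
    HasDerivAt (fun t => deliveryDenominator a p B Ω i (Function.update c i t))
      (-(p * B i - a * (Ω i - B i)) / (a * hopRate (B i) (Ω i) (c i) ^ 2)) (c i) := by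
  simp only [deliveryDenominator, Function.update_self]
  refine ((hasDerivAt_one_sub_mul_div_hopRate ha hx).add
    (HasDerivAt.sum_apply_update (F := fun k t => 1 / hopRate (B k) (Ω k) t)
      (hasDerivAt_one_div_hopRate hx))).congr_deriv ?_
  field_simp
  ring

end Denominator

lemma HasDerivAt.const_div_of_neg_div {D : ℝ → ℝ} {T s M t : ℝ}
    (hD : HasDerivAt D (-s / M) t) (hDt : D t ≠ 0) (hM : M ≠ 0) :
    HasDerivAt (fun u => T / D u) (s * (T / (M * D t ^ 2))) t := by
  refine ((hasDerivAt_const t T).div hD hDt).congr_deriv ?_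
  field_simp
  ring

lemma lt_threshold_iff {a p b w : ℝ} (ha : 0 < a) :
    w < b * (1 + p / a) ↔ 0 < p * b - a * (w - b) := by
  have : b * (1 + p / a) - w = (p * b - a * (w - b)) / a := by field_simp; ring
  rw [← sub_pos, this, div_pos_iff_of_pos_right ha]

lemma threshold_lt_iff {a p b w : ℝ} (ha : 0 < a) :
    b * (1 + p / a) < w ↔ p * b - a * (w - b) < 0 := by
  have : b * (1 + p / a) - w = (p * b - a * (w - b)) / a := by field_simp; ring
  rw [← sub_neg, this, div_lt_iff₀ ha, zero_mul]

/-- For the source hop (hop 1, indexed `⟨0,hK⟩`), the partial derivative of the HBCT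
end-to-end bit delivery `R(c) = T / ((1−c_1)p_1/(ζ P_t h_1 X_1(c_1)) + Σ_i 1/X_i(c_i))`,
`X_i(c_i) = B_i + (1−c_i)(Ω_i − B_i)`, with respect to `c_1` has the same sign as
`p_1 B_1 − ζ P_t h_1 (Ω_1 − B_1)`; in particular `R` is increasing in `c_1` iff
`Ω_1 < B_1 (1 + p_1/(ζ P_t h_1))` and decreasing iff the reverse strict inequality holds. -/
theorem stmt8 (K : ℕ) (hK : 0 < K) (T p1 ζ Pt h1 : ℝ) (Ω B : Fin K → ℝ)
    (hT : 0 < T) (hp1 : 0 < p1) (hζ : 0 < ζ) (hPt : 0 < Pt) (hh1 : 0 < h1)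
    (hΩ : ∀ k, 0 < Ω k) (hB : ∀ k, 0 < B k)
    (c : Fin K → ℝ) (hc : ∀ k, c k ∈ Set.Icc (0 : ℝ) 1) :
    let X : (Fin K → ℝ) → Fin K → ℝ := fun c k => B k + (1 - c k) * (Ω k - B k)
    let R : (Fin K → ℝ) → ℝ := fun c =>
      T / ((1 - c ⟨0, hK⟩) * p1 / (ζ * Pt * h1 * X c ⟨0, hK⟩) + ∑ k, 1 / X c k)
    ∃ d : ℝ, HasDerivAt (fun t => R (Function.update c ⟨0, hK⟩ t)) d (c ⟨0, hK⟩) ∧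
      (0 < p1 * B ⟨0, hK⟩ - ζ * Pt * h1 * (Ω ⟨0, hK⟩ - B ⟨0, hK⟩) → 0 < d) ∧
      (p1 * B ⟨0, hK⟩ - ζ * Pt * h1 * (Ω ⟨0, hK⟩ - B ⟨0, hK⟩) < 0 → d < 0) ∧
      (p1 * B ⟨0, hK⟩ - ζ * Pt * h1 * (Ω ⟨0, hK⟩ - B ⟨0, hK⟩) = 0 → d = 0) ∧
      (Ω ⟨0, hK⟩ < B ⟨0, hK⟩ * (1 + p1 / (ζ * Pt * h1)) → 0 < d) ∧
      (B ⟨0, hK⟩ * (1 + p1 / (ζ * Pt * h1)) < Ω ⟨0, hK⟩ → d < 0) := by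
  intro X R
  set i₀ : Fin K := ⟨0, hK⟩
  set a := ζ * Pt * h1
  have ha : 0 < a := by positivity
  have hx : 0 < hopRate (B i₀) (Ω i₀) (c i₀) := hopRate_pos (hB i₀) (hΩ i₀) (hc i₀)
  have hDpos := deliveryDenominator_pos i₀ ha hp1.le hB hΩ hc
  have hR : HasDerivAt (fun t => R (Function.update c i₀ t)) _ (c i₀) :=
    (hasDerivAt_deliveryDenominator_update ha.ne' hx.ne').const_div_of_neg_div
      (by simpa only [Function.update_eq_self] using hDpos.ne') (by positivity)
  have hM : 0 < T / (a * hopRate (B i₀) (Ω i₀) (c i₀) ^ 2 *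
      deliveryDenominator a p1 B Ω i₀ (Function.update c i₀ (c i₀)) ^ 2) := by
    rw [Function.update_eq_self]
    positivity
  refine ⟨_, hR, fun h => mul_pos h hM, fun h => mul_neg_of_neg_of_pos h hM,
    fun h => by rw [h, zero_mul], fun h => mul_pos ((lt_threshold_iff ha).1 h) hM,
    fun h => mul_neg_of_neg_of_pos ((threshold_lt_iff ha).1 h) hM⟩
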